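/- Let n ≥ 1, let P and Q be real symmetric n×n matrices and let L be an invertible real n×n matrix. Then M_{P,L,Q} ∘ M_{−Q,−Lᵀ,−P} = Id on Schwartz functions; that is, for every Schwartz function u on ℝⁿ, |det L|^{1/2} ∫ e^{iπ(⟨Px,x⟩ − 2⟨Lx,z⟩ + ⟨Qz,z⟩)} (|det L|^{1/2} ∫ e^{iπ(−⟨Qz,z⟩ + 2⟨Lᵀz,y⟩ − ⟨Py,y⟩)} u(y) dy) dz = u(x). In particular, up to a unimodular constant phase, the inverse of M_{P,L,Q} is M_{−Q,−Lᵀ,−P}. -/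

import Mathlib

open MeasureTheory Matrix

noncomputable section

/-- The metaplectic-type integral operator `M_{P,L,Q}` (up to a unimodular constant phase). -/
def Mplq {n : ℕ} (P L Q : Matrix (Fin n) (Fin n) ℝ) (u : (Fin n → ℝ) → ℂ) :
    (Fin n → ℝ) → ℂ :=
  fun x => (Real.sqrt |L.det| : ℂ) *
    ∫ y : Fin n → ℝ,
      Complex.exp (Complex.I * (Real.pi : ℂ) *
        ((P.mulVec x ⬝ᵥ x - 2 * (L.mulVec x ⬝ᵥ y) + Q.mulVec y ⬝ᵥ y : ℝ) : ℂ)) * u y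

section MplqAuxSection

open Complex FourierTransform RealInnerProductSpace
open scoped ContDiff

namespace MplqAux

variable {D : Type*} [NormedAddCommGroup D] [NormedSpace ℝ D]
variable {E : Type*} [NormedAddCommGroup E] [NormedSpace ℝ E]
variable {F : Type*} [NormedAddCommGroup F] [NormedSpace ℝ F]
variable {G : Type*} [NormedAddCommGroup G] [NormedSpace ℝ G]

lemma coe_le_infty (n : ℕ) : (n : WithTop ℕ∞) ≤ ∞ := by exact_mod_cast le_top

lemma tg_clm_comp (g : F →L[ℝ] G) {f : E → F} (hf : Function.HasTemperateGrowth f) :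
    Function.HasTemperateGrowth (fun x => g (f x)) := by
  refine ⟨g.contDiff.comp hf.1, fun n => ?_⟩
  obtain ⟨k, C, hC⟩ := hf.2 n
  refine ⟨k, ‖g‖ * C, fun x => ?_⟩
  have h1 : iteratedFDeriv ℝ n (⇑g ∘ f) x
      = g.compContinuousMultilinearMap (iteratedFDeriv ℝ n f x) :=
    g.iteratedFDeriv_comp_left (x := x) hf.1.contDiffAt (coe_le_infty n)
  have h2 : ‖iteratedFDeriv ℝ n (fun x => g (f x)) x‖
      = ‖g.compContinuousMultilinearMap (iteratedFDeriv ℝ n f x)‖ := by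
    rw [← h1]; rfl
  rw [h2, mul_assoc]
  exact (g.norm_compContinuousMultilinearMap_le _).trans
    (mul_le_mul_of_nonneg_left (hC x) (norm_nonneg g))

lemma tg_bilin (B : E →L[ℝ] F →L[ℝ] G) {f : D → E} {g : D → F}
    (hf : Function.HasTemperateGrowth f) (hg : Function.HasTemperateGrowth g) :
    Function.HasTemperateGrowth (fun x => B (f x) (g x)) := by
  refine ⟨(B.isBoundedBilinearMap.contDiff).comp (hf.1.prodMk hg.1), fun n => ?_⟩
  obtain ⟨kf, Cf, hCf0, hCf⟩ := hf.norm_iteratedFDeriv_le_uniform n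
  obtain ⟨kg, Cg, hCg0, hCg⟩ := hg.norm_iteratedFDeriv_le_uniform n
  refine ⟨kf + kg, ‖B‖ * (2 ^ n * (Cf * (Cg * 1))), fun x => ?_⟩
  have h := B.norm_iteratedFDeriv_le_of_bilinear hf.1 hg.1 x (n := n) (coe_le_infty n)
  refine h.trans ?_
  have hb : (0:ℝ) ≤ 1 + ‖x‖ := by positivity
  have h2 : ∑ i ∈ Finset.range (n+1), (n.choose i : ℝ) * ‖iteratedFDeriv ℝ i f x‖ *
        ‖iteratedFDeriv ℝ (n-i) g x‖
      ≤ ∑ i ∈ Finset.range (n+1), (n.choose i : ℝ) * (Cf * Cg * (1+‖x‖)^(kf+kg)) := by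
    apply Finset.sum_le_sum
    intro i hi
    rw [Finset.mem_range] at hi
    have h3 := hCf i (by omega) x
    have h4 := hCg (n - i) (by omega) x
    have h5 : (n.choose i : ℝ) * ‖iteratedFDeriv ℝ i f x‖ * ‖iteratedFDeriv ℝ (n-i) g x‖
        ≤ (n.choose i : ℝ) * (Cf * (1+‖x‖)^kf) * (Cg * (1+‖x‖)^kg) := by
      gcongr <;> positivity
    refine h5.trans (le_of_eq ?_)
    rw [pow_add]; ring
  refine (mul_le_mul_of_nonneg_left h2 (norm_nonneg B)).trans (le_of_eq ?_)
  rw [← Finset.sum_mul]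
  have h6 : (∑ i ∈ Finset.range (n+1), (n.choose i : ℝ)) = 2 ^ n := by
    rw [← Nat.cast_sum, Nat.sum_range_choose]; push_cast; ring
  rw [h6]; ring

lemma tg_mul {A : Type*} [NormedRing A] [NormedAlgebra ℝ A] {f g : E → A}
    (hf : Function.HasTemperateGrowth f) (hg : Function.HasTemperateGrowth g) :
    Function.HasTemperateGrowth (fun x => f x * g x) :=
  tg_bilin (ContinuousLinearMap.mul ℝ A) hf hg

lemma tg_add {f g : E → F}
    (hf : Function.HasTemperateGrowth f) (hg : Function.HasTemperateGrowth g) :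
    Function.HasTemperateGrowth (fun x => f x + g x) := by
  refine ⟨hf.1.add hg.1, fun n => ?_⟩
  obtain ⟨kf, Cf, hCf0, hCf⟩ := hf.norm_iteratedFDeriv_le_uniform n
  obtain ⟨kg, Cg, hCg0, hCg⟩ := hg.norm_iteratedFDeriv_le_uniform n
  refine ⟨kf + kg, Cf + Cg, fun x => ?_⟩
  have hx1 : (1:ℝ) ≤ 1 + ‖x‖ := by linarith [norm_nonneg x]
  have hiter : iteratedFDeriv ℝ n (fun x => f x + g x) x
      = iteratedFDeriv ℝ n f x + iteratedFDeriv ℝ n g x :=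
    iteratedFDeriv_add_apply (hf.1.of_le (coe_le_infty n)).contDiffAt (hg.1.of_le (coe_le_infty n)).contDiffAt
  rw [hiter]
  refine (norm_add_le _ _).trans ?_
  have h1 : ‖iteratedFDeriv ℝ n f x‖ ≤ Cf * (1+‖x‖)^(kf+kg) :=
    (hCf n le_rfl x).trans
      (mul_le_mul_of_nonneg_left (pow_le_pow_right₀ hx1 (Nat.le_add_right _ _)) hCf0)
  have h2 : ‖iteratedFDeriv ℝ n g x‖ ≤ Cg * (1+‖x‖)^(kf+kg) :=
    (hCg n le_rfl x).trans
      (mul_le_mul_of_nonneg_left (pow_le_pow_right₀ hx1 (Nat.le_add_left _ _)) hCg0)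
  rw [add_mul]; exact add_le_add h1 h2

lemma tg_sum {ι : Type*} (s : Finset ι) (f : ι → E → F)
    (h : ∀ i ∈ s, Function.HasTemperateGrowth (f i)) :
    Function.HasTemperateGrowth (fun x => ∑ i ∈ s, f i x) := by
  classical
  induction s using Finset.induction_on with
  | empty => simpa using Function.HasTemperateGrowth.const (0 : F)
  | @insert a s hnotmem ih =>
    simp only [Finset.sum_insert hnotmem]
    exact tg_add (h _ (Finset.mem_insert_self _ _))
      (ih fun i hi => h i (Finset.mem_insert_of_mem hi))

lemma norm_iteratedFDeriv_cexp (m : ℕ) (z : ℂ) :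
    ‖iteratedFDeriv ℝ m Complex.exp z‖ = Real.exp z.re := by
  have h1 : HasFTaylorSeriesUpTo (((⊤ : ℕ∞)) : WithTop ℕ∞) Complex.exp
      (ftaylorSeries ℂ Complex.exp) :=
    contDiff_iff_ftaylorSeries.mp Complex.contDiff_exp
  have h2 : HasFTaylorSeriesUpTo (((⊤ : ℕ∞)) : WithTop ℕ∞) Complex.exp
      (fun x => (ftaylorSeries ℂ Complex.exp x).restrictScalars ℝ) := by
    rw [← hasFTaylorSeriesUpToOn_univ_iff] at h1 ⊢
    exact h1.restrictScalars ℝ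
  have h3 := h2.eq_iteratedFDeriv (m := m) (by exact_mod_cast le_top) z
  rw [← h3]
  have h4 : ‖(ftaylorSeries ℂ Complex.exp z).restrictScalars ℝ m‖
      = ‖iteratedFDeriv ℂ m Complex.exp z‖ := by
    rw [show (ftaylorSeries ℂ Complex.exp z).restrictScalars ℝ m
        = ContinuousMultilinearMap.restrictScalars ℝ (iteratedFDeriv ℂ m Complex.exp z) from rfl]
    exact ContinuousMultilinearMap.norm_restrictScalars _
  rw [h4, norm_iteratedFDeriv_eq_norm_iteratedDeriv, iteratedDeriv_eq_iterate,
    Complex.iter_deriv_exp, Complex.norm_exp]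

lemma tg_cexp_I_mul {f : E → ℝ} (hf : Function.HasTemperateGrowth f) :
    Function.HasTemperateGrowth (fun x => Complex.exp (Complex.I * (f x : ℂ))) := by
  have hj : Function.HasTemperateGrowth (fun x => (Complex.I * (f x : ℂ) : ℂ)) := by
    have h := tg_clm_comp (Complex.I • Complex.ofRealCLM) hf
    simpa [smul_eq_mul] using h
  refine ⟨Complex.contDiff_exp.comp hj.1, fun n => ?_⟩
  obtain ⟨k, C, hC0, hC⟩ := hj.norm_iteratedFDeriv_le_uniform n
  refine ⟨k * n, n.factorial * (1 + C) ^ n, fun x => ?_⟩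
  have hx1 : (1:ℝ) ≤ 1 + ‖x‖ := by linarith [norm_nonneg x]
  have hpk : (1:ℝ) ≤ (1 + ‖x‖) ^ k := one_le_pow₀ hx1
  set D : ℝ := (1 + C) * (1 + ‖x‖) ^ k with hD
  have hD1 : (1:ℝ) ≤ D := by
    calc (1:ℝ) = 1 * 1 := (one_mul 1).symm
    _ ≤ (1 + C) * (1 + ‖x‖) ^ k := by
        apply mul_le_mul (by linarith) hpk zero_le_one (by linarith)
  have hb := norm_iteratedFDeriv_comp_le (g := Complex.exp)
      (f := fun x => (Complex.I * (f x : ℂ) : ℂ)) Complex.contDiff_exp hj.1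
      (coe_le_infty n) x (C := 1) (D := D) ?_ ?_
  · have heq : (fun x => Complex.exp (Complex.I * (f x : ℂ)))
        = Complex.exp ∘ (fun x => (Complex.I * (f x : ℂ) : ℂ)) := rfl
    rw [heq]
    refine hb.trans (le_of_eq ?_)
    rw [hD, mul_pow, ← pow_mul]
    ring
  · intro i _
    rw [norm_iteratedFDeriv_cexp]
    simp
  · intro i hi1 hin
    refine (hC i hin x).trans ?_
    calc C * (1 + ‖x‖) ^ k ≤ (1 + C) * (1 + ‖x‖) ^ k := by
          apply mul_le_mul_of_nonneg_right (by linarith) (by positivity)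
    _ = D := rfl
    _ ≤ D ^ i := le_self_pow₀ hD1 (by omega)

end MplqAux

namespace MplqAux2

lemma tg_dot {n : ℕ} {E : Type*} [NormedAddCommGroup E] [NormedSpace ℝ E]
    (a b : E →L[ℝ] (Fin n → ℝ)) :
    Function.HasTemperateGrowth (fun x => a x ⬝ᵥ b x) := by
  have h : (fun x => a x ⬝ᵥ b x)
      = fun x => ∑ i : Fin n, (((ContinuousLinearMap.proj i).comp a) x *
          ((ContinuousLinearMap.proj (R := ℝ) (φ := fun _ : Fin n => ℝ) i).comp b) x) := rfl
  rw [h]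
  exact MplqAux.tg_sum Finset.univ _ (fun i _ => MplqAux.tg_mul
    (((ContinuousLinearMap.proj i).comp a).hasTemperateGrowth)
    (((ContinuousLinearMap.proj i).comp b).hasTemperateGrowth))

lemma integral_comp_mulVec {n : ℕ} (A : Matrix (Fin n) (Fin n) ℝ) (hA : A.det ≠ 0)
    (g : (Fin n → ℝ) → ℂ) (hg : Continuous g) :
    ∫ z, g (A.mulVec z) = |A.det|⁻¹ • ∫ t, g t := by
  have hdet : LinearMap.det (Matrix.toLin' A) ≠ 0 := by rwa [LinearMap.det_toLin']
  have hmap : Measure.map (⇑(Matrix.toLin' A)) volume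
      = ENNReal.ofReal |(LinearMap.det (Matrix.toLin' A))⁻¹| • volume :=
    Measure.map_linearMap_addHaar_eq_smul_addHaar volume hdet
  have hmeas : AEMeasurable (⇑(Matrix.toLin' A)) volume :=
    ((Matrix.toLin' A).continuous_of_finiteDimensional).measurable.aemeasurable
  have h1 : ∫ t, g t ∂(Measure.map (⇑(Matrix.toLin' A)) volume)
      = ∫ z, g ((Matrix.toLin' A) z) :=
    integral_map hmeas hg.aestronglyMeasurable
  have h2 : ∀ z, (Matrix.toLin' A) z = A.mulVec z := fun z => Matrix.toLin'_apply A z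
  simp only [h2] at h1
  rw [← h1, hmap, integral_smul_measure, LinearMap.det_toLin',
    ENNReal.toReal_ofReal (abs_nonneg _), abs_inv]

end MplqAux2

end MplqAuxSection

open MplqAux MplqAux2 in
/-- `M_{P,L,Q} ∘ M_{−Q,−Lᵀ,−P} = Id` on Schwartz functions. -/
theorem Mplq_comp_Mplq_eq_id {n : ℕ} (hn : 1 ≤ n)
    (P L Q : Matrix (Fin n) (Fin n) ℝ)
    (hP : P.IsSymm) (hQ : Q.IsSymm) (hL : IsUnit L.det)
    (u : SchwartzMap (Fin n → ℝ) ℂ) (x : Fin n → ℝ) :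
    Mplq P L Q (Mplq (-Q) (-Lᵀ) (-P) ⇑u) x = u x := by
  have hdet : L.det ≠ 0 := hL.ne_zero
  set d : ℝ := |L.det| with hd
  have hd0 : (0:ℝ) < d := abs_pos.mpr hdet
  set e := PiLp.continuousLinearEquiv 2 ℝ (fun _ : Fin n => ℝ) with he
  -- transfer of integrals to Euclidean space
  have hMP : ∀ (F : (Fin n → ℝ) → ℂ),
      (∫ y, F y) = ∫ y : EuclideanSpace ℝ (Fin n), F (e y) :=
    fun F => ((EuclideanSpace.volume_preserving_symm_measurableEquiv_toLp (Fin n)).integral_comp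
      (MeasurableEquiv.toLp 2 (Fin n → ℝ)).symm.measurableEmbedding F).symm
  -- inner product vs dot product
  have hip : ∀ a b : EuclideanSpace ℝ (Fin n), (inner ℝ a b : ℝ) = e a ⬝ᵥ e b := by
    intro a b
    rw [EuclideanSpace.inner_eq_star_dotProduct, star_trivial, dotProduct_comm]; rfl
  -- the Schwartz function v
  have hq : Function.HasTemperateGrowth
      (fun y : EuclideanSpace ℝ (Fin n) => -Real.pi * (P.mulVec (e y) ⬝ᵥ e y)) := by
    have h1 : Function.HasTemperateGrowth
        (fun y : EuclideanSpace ℝ (Fin n) => P.mulVec (e y) ⬝ᵥ e y) :=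
      tg_dot ((LinearMap.toContinuousLinearMap (Matrix.mulVecLin P)).comp
        (e : EuclideanSpace ℝ (Fin n) →L[ℝ] (Fin n → ℝ)))
        (e : EuclideanSpace ℝ (Fin n) →L[ℝ] (Fin n → ℝ))
    exact tg_mul (Function.HasTemperateGrowth.const (-Real.pi)) h1
  have hgP : Function.HasTemperateGrowth
      (fun y : EuclideanSpace ℝ (Fin n) =>
        Complex.exp (Complex.I * ((-Real.pi * (P.mulVec (e y) ⬝ᵥ e y) : ℝ) : ℂ))) :=
    tg_cexp_I_mul hq
  set uE : SchwartzMap (EuclideanSpace ℝ (Fin n)) ℂ :=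
    SchwartzMap.compCLMOfContinuousLinearEquiv ℝ e u with huE
  set v : SchwartzMap (EuclideanSpace ℝ (Fin n)) ℂ :=
    SchwartzMap.bilinLeftCLM (ContinuousLinearMap.mul ℝ ℂ) hgP uE with hvdef
  have hv : ∀ y, v y = u (e y) *
      Complex.exp (Complex.I * ((-Real.pi * (P.mulVec (e y) ⬝ᵥ e y) : ℝ) : ℂ)) :=
    fun y => rfl
  set w : SchwartzMap (EuclideanSpace ℝ (Fin n)) ℂ :=
    (FourierTransform.fourierCLE ℂ (SchwartzMap (EuclideanSpace ℝ (Fin n)) ℂ)).symm v with hwdef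
  have hw : ⇑w = FourierTransformInv.fourierInv ⇑v := by
    rw [hwdef, FourierTransform.fourierCLE_symm_apply, SchwartzMap.fourierInv_coe]
  have hwv : FourierTransform.fourier ⇑w = ⇑v := by
    rw [hwdef, ← SchwartzMap.fourier_coe, ← FourierTransform.fourierCLE_apply (R := ℂ),
      ContinuousLinearEquiv.apply_symm_apply]
  -- determinant computation
  have hdT : Real.sqrt |(-Lᵀ).det| = Real.sqrt d := by
    rw [Matrix.det_neg, Matrix.det_transpose, abs_mul, _root_.abs_pow, _root_.abs_neg, abs_one,
      one_pow, one_mul]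
  -- the inner operator
  have inner_eq : ∀ z : Fin n → ℝ,
      Mplq (-Q) (-Lᵀ) (-P) (⇑u) z
        = (Real.sqrt d : ℂ) *
            (Complex.exp (Complex.I * Real.pi * ((-(Q.mulVec z ⬝ᵥ z) : ℝ) : ℂ))
              * w (e.symm (Lᵀ.mulVec z))) := by
    intro z
    have hxi : ∀ y : EuclideanSpace ℝ (Fin n),
        (inner ℝ y (e.symm (Lᵀ.mulVec z)) : ℝ) = e y ⬝ᵥ Lᵀ.mulVec z := by
      intro y; rw [hip, e.apply_symm_apply]
    have hpt : ∀ y : EuclideanSpace ℝ (Fin n),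
        Complex.exp (Complex.I * Real.pi *
            ((((-Q).mulVec z ⬝ᵥ z) - 2 * ((-Lᵀ).mulVec z ⬝ᵥ (e y))
              + ((-P).mulVec (e y) ⬝ᵥ (e y)) : ℝ) : ℂ)) * u (e y)
          = Complex.exp (Complex.I * Real.pi * ((-(Q.mulVec z ⬝ᵥ z) : ℝ) : ℂ)) *
            (Complex.exp (((2 * Real.pi * (inner ℝ y (e.symm (Lᵀ.mulVec z)) : ℝ) : ℝ) : ℂ) * Complex.I)
              • v y) := by
      intro y
      rw [hv y, hxi y, smul_eq_mul]
      have hneg : (((-Q).mulVec z ⬝ᵥ z) - 2 * ((-Lᵀ).mulVec z ⬝ᵥ (e y))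
            + ((-P).mulVec (e y) ⬝ᵥ (e y)))
          = (-(Q.mulVec z ⬝ᵥ z)) + 2 * ((Lᵀ.mulVec z) ⬝ᵥ (e y))
            + (-(P.mulVec (e y) ⬝ᵥ (e y))) := by
        simp only [Matrix.neg_mulVec, neg_dotProduct]; ring
      rw [hneg]
      have hcomb : Complex.exp (Complex.I * Real.pi *
            ((((-(Q.mulVec z ⬝ᵥ z)) + 2 * ((Lᵀ.mulVec z) ⬝ᵥ (e y))
              + (-(P.mulVec (e y) ⬝ᵥ (e y)))) : ℝ) : ℂ))
          = Complex.exp (Complex.I * Real.pi * ((-(Q.mulVec z ⬝ᵥ z) : ℝ) : ℂ))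
            * Complex.exp (((2 * Real.pi * (e y ⬝ᵥ Lᵀ.mulVec z) : ℝ) : ℂ) * Complex.I)
            * Complex.exp (Complex.I * ((-Real.pi * (P.mulVec (e y) ⬝ᵥ e y) : ℝ) : ℂ)) := by
        rw [← Complex.exp_add, ← Complex.exp_add]
        congr 1
        rw [dotProduct_comm (e y) (Lᵀ.mulVec z)]
        push_cast
        ring
      rw [hcomb]; ring
    simp only [Mplq]
    rw [hdT, hMP]
    simp only [hpt]
    rw [integral_const_mul]
    rw [show (∫ y : EuclideanSpace ℝ (Fin n),
        Complex.exp (((2 * Real.pi * (inner ℝ y (e.symm (Lᵀ.mulVec z)) : ℝ) : ℝ) : ℂ) * Complex.I) • v y)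
      = FourierTransformInv.fourierInv ⇑v (e.symm (Lᵀ.mulVec z)) from
        (Real.fourierInv_eq' ⇑v (e.symm (Lᵀ.mulVec z))).symm]
    rw [show FourierTransformInv.fourierInv ⇑v = ⇑w from hw.symm]
  -- outer operator
  rw [show Mplq P L Q (Mplq (-Q) (-Lᵀ) (-P) ⇑u) x
      = (Real.sqrt d : ℂ) * ∫ z : Fin n → ℝ,
          Complex.exp (Complex.I * Real.pi *
            ((P.mulVec x ⬝ᵥ x - 2 * (L.mulVec x ⬝ᵥ z) + Q.mulVec z ⬝ᵥ z : ℝ) : ℂ))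
            * Mplq (-Q) (-Lᵀ) (-P) (⇑u) z from rfl]
  simp only [inner_eq]
  have hLxz : ∀ z : Fin n → ℝ, L.mulVec x ⬝ᵥ z = Lᵀ.mulVec z ⬝ᵥ x := by
    intro z
    rw [Matrix.mulVec_transpose, ← Matrix.dotProduct_mulVec, dotProduct_comm]
  have hpt2 : ∀ z : Fin n → ℝ,
      Complex.exp (Complex.I * Real.pi *
          ((P.mulVec x ⬝ᵥ x - 2 * (L.mulVec x ⬝ᵥ z) + Q.mulVec z ⬝ᵥ z : ℝ) : ℂ))
        * ((Real.sqrt d : ℂ) *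
            (Complex.exp (Complex.I * Real.pi * ((-(Q.mulVec z ⬝ᵥ z) : ℝ) : ℂ))
              * w (e.symm (Lᵀ.mulVec z))))
      = ((Real.sqrt d : ℂ) * Complex.exp (Complex.I * Real.pi * ((P.mulVec x ⬝ᵥ x : ℝ) : ℂ)))
        * ((fun t : Fin n → ℝ =>
            Complex.exp (((-2 * Real.pi * (t ⬝ᵥ x) : ℝ) : ℂ) * Complex.I) * w (e.symm t))
              (Lᵀ.mulVec z)) := by
    intro z
    simp only []
    have hcomb2 : Complex.exp (Complex.I * Real.pi *
          ((P.mulVec x ⬝ᵥ x - 2 * (L.mulVec x ⬝ᵥ z) + Q.mulVec z ⬝ᵥ z : ℝ) : ℂ))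
        * Complex.exp (Complex.I * Real.pi * ((-(Q.mulVec z ⬝ᵥ z) : ℝ) : ℂ))
      = Complex.exp (Complex.I * Real.pi * ((P.mulVec x ⬝ᵥ x : ℝ) : ℂ))
        * Complex.exp (((-2 * Real.pi * ((Lᵀ.mulVec z) ⬝ᵥ x) : ℝ) : ℂ) * Complex.I) := by
      rw [← Complex.exp_add, ← Complex.exp_add]
      congr 1
      rw [hLxz z]
      push_cast
      ring
    calc Complex.exp (Complex.I * Real.pi *
          ((P.mulVec x ⬝ᵥ x - 2 * (L.mulVec x ⬝ᵥ z) + Q.mulVec z ⬝ᵥ z : ℝ) : ℂ))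
        * ((Real.sqrt d : ℂ) *
            (Complex.exp (Complex.I * Real.pi * ((-(Q.mulVec z ⬝ᵥ z) : ℝ) : ℂ))
              * w (e.symm (Lᵀ.mulVec z))))
        = (Real.sqrt d : ℂ) *
            ((Complex.exp (Complex.I * Real.pi *
              ((P.mulVec x ⬝ᵥ x - 2 * (L.mulVec x ⬝ᵥ z) + Q.mulVec z ⬝ᵥ z : ℝ) : ℂ))
              * Complex.exp (Complex.I * Real.pi * ((-(Q.mulVec z ⬝ᵥ z) : ℝ) : ℂ)))
              * w (e.symm (Lᵀ.mulVec z))) := by ring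
      _ = _ := by rw [hcomb2]; ring
  simp only [hpt2]
  rw [integral_const_mul]
  have hcont : Continuous (fun t : Fin n → ℝ =>
      Complex.exp (((-2 * Real.pi * (t ⬝ᵥ x) : ℝ) : ℂ) * Complex.I) * w (e.symm t)) := by
    have hdotc : Continuous fun t : Fin n → ℝ => t ⬝ᵥ x :=
      continuous_finset_sum Finset.univ fun i _ => (continuous_apply i).mul continuous_const
    exact (Complex.continuous_exp.comp
        (((Complex.continuous_ofReal.comp (continuous_const.mul hdotc))).mul
          continuous_const)).mul (w.continuous.comp e.symm.continuous)
  rw [integral_comp_mulVec Lᵀ (by simpa [Matrix.det_transpose] using hdet) _ hcont,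
    Matrix.det_transpose]
  rw [hMP (fun t => Complex.exp (((-2 * Real.pi * (t ⬝ᵥ x) : ℝ) : ℂ) * Complex.I)
      * w (e.symm t))]
  have hipx : ∀ t : EuclideanSpace ℝ (Fin n), (e t) ⬝ᵥ x = (inner ℝ t (e.symm x) : ℝ) := by
    intro t; rw [hip, e.apply_symm_apply]
  simp only [ContinuousLinearEquiv.symm_apply_apply, hipx]
  rw [show (∫ t : EuclideanSpace ℝ (Fin n),
      Complex.exp (((-2 * Real.pi * (inner ℝ t (e.symm x) : ℝ) : ℝ) : ℂ) * Complex.I) * w t)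
    = FourierTransform.fourier ⇑w (e.symm x) from by
      rw [Real.fourier_eq']; simp only [smul_eq_mul]]
  rw [hwv, hv (e.symm x), e.apply_symm_apply]
  have hexp0 : Complex.exp (Complex.I * Real.pi * ((P.mulVec x ⬝ᵥ x : ℝ) : ℂ))
      * Complex.exp (Complex.I * ((-Real.pi * (P.mulVec x ⬝ᵥ x) : ℝ) : ℂ)) = 1 := by
    rw [← Complex.exp_add, ← Complex.exp_zero]
    congr 1
    push_cast
    ring
  have hc : ((Real.sqrt d : ℝ) : ℂ) * ((Real.sqrt d : ℝ) : ℂ) * ((d⁻¹ : ℝ) : ℂ) = 1 := by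
    rw [← Complex.ofReal_mul, Real.mul_self_sqrt hd0.le, ← Complex.ofReal_mul,
      mul_inv_cancel₀ hd0.ne']
    exact Complex.ofReal_one
  rw [Complex.real_smul]
  linear_combination (((Real.sqrt d : ℝ) : ℂ) * ((Real.sqrt d : ℝ) : ℂ) * ((d⁻¹ : ℝ) : ℂ)
      * u x) * hexp0 + (u x) * hc

end
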